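/- If G is a k-regular graph on n vertices, then the Sombor index of the m-splitting graph Spl_m(G) equals SO(G)·(m√(2m²+4m+4) + (m+1)), i.e. (nk²/√2)·(m√(2m²+4m+4) + (m+1)). -/

import Mathlib

open Finset Matrix Polynomial Kronecker

noncomputable def somborIndex {V : Type*} [Fintype V] [DecidableEq V]
    (G : SimpleGraph V) [DecidableRel G.Adj] : ℝ :=
  ∑ e ∈ G.edgeFinset,
    Sym2.lift ⟨fun u v => Real.sqrt ((G.degree u : ℝ) ^ 2 + (G.degree v : ℝ) ^ 2),
      fun u v => by simp [add_comm]⟩ e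

/-- The `m`-splitting graph: vertices `(v, 0)` are the original vertices, and
`(v, j)` for `j ≠ 0` are the `m` added copies of `v`, adjacent to the neighbors of `v`. -/
def splittingGraph {V : Type*} (G : SimpleGraph V) (m : ℕ) :
    SimpleGraph (V × Fin (m + 1)) where
  Adj p q := G.Adj p.1 q.1 ∧ (p.2 = 0 ∨ q.2 = 0)
  symm := ⟨fun p q h => ⟨h.1.symm, h.2.symm⟩⟩
  loopless := ⟨fun p h => G.loopless.irrefl p.1 h.1⟩

instance {V : Type*} (G : SimpleGraph V) [DecidableRel G.Adj] (m : ℕ) :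
    DecidableRel (splittingGraph G m).Adj :=
  fun _ _ => inferInstanceAs (Decidable (_ ∧ _))

/-- The `m`-shadow graph: `m` copies of `G`, with each vertex joined to the neighbors of
the corresponding vertex in every copy. -/
def shadowGraph {V : Type*} (G : SimpleGraph V) (m : ℕ) :
    SimpleGraph (V × Fin m) where
  Adj p q := G.Adj p.1 q.1
  symm := ⟨fun _ _ h => h.symm⟩
  loopless := ⟨fun p h => G.loopless.irrefl p.1 h⟩

instance {V : Type*} (G : SimpleGraph V) [DecidableRel G.Adj] (m : ℕ) :
    DecidableRel (shadowGraph G m).Adj :=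
  fun p q => inferInstanceAs (Decidable (G.Adj p.1 q.1))

noncomputable def somborMatrix {V : Type*} [Fintype V] [DecidableEq V]
    (G : SimpleGraph V) [DecidableRel G.Adj] : Matrix V V ℝ :=
  Matrix.of fun u v =>
    if G.Adj u v then Real.sqrt ((G.degree u : ℝ) ^ 2 + (G.degree v : ℝ) ^ 2) else 0

/-!
Summing over darts, `2 SO(H) = ∑_v ∑_{w ~ v} √(d(v)² + d(w)²)`. In `Spl_m(G)` the vertex `(v, i)`
is adjacent to `(w, j)` iff `v ~ w` in `G` and `i = 0 ∨ j = 0`, so for `k`-regular `G` its degree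
is `(m + 1) k` if `i = 0` and `k` otherwise. Each of the `n k` darts of `G` therefore lifts to one
dart between original vertices, of weight `√2 (m + 1) k`, and to `2 m` darts between an original
and a new vertex, of weight `k √((m + 1)² + 1)`.
-/

namespace SimpleGraph

variable {W : Type*} [Fintype W] (H : SimpleGraph W) [DecidableRel H.Adj]
  {M : Type*} [AddCommMonoid M]

lemma sum_dart_eq_sum_sum_neighborFinset (f : W → W → M) :
    ∑ d : H.Dart, f d.fst d.snd = ∑ v, ∑ w ∈ H.neighborFinset v, f v w := by
  rw [Finset.sum_sigma']
  refine Finset.sum_bij' (fun d _ => ⟨d.fst, d.snd⟩) (fun x hx => ⟨(x.1, x.2), by simpa using hx⟩)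
    ?_ ?_ ?_ ?_ ?_ <;> simp [Dart.adj]

lemma sum_dart_edge [DecidableEq W] (f : Sym2 W → M) :
    ∑ d : H.Dart, f d.edge = 2 • ∑ e ∈ H.edgeFinset, f e := by
  rw [← Finset.sum_fiberwise_of_maps_to (g := Dart.edge) (t := H.edgeFinset)
    (fun d _ => mem_edgeFinset.mpr d.edge_mem), Finset.smul_sum]
  refine Finset.sum_congr rfl fun e he => ?_
  rw [Finset.sum_congr rfl fun d hd => congrArg f (Finset.mem_filter.mp hd).2, Finset.sum_const,
    H.dart_edge_fiber_card e (mem_edgeFinset.mp he)]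

lemma two_nsmul_sum_edgeFinset_lift [DecidableEq W]
    (f : {f : W → W → M // ∀ a b, f a b = f b a}) :
    2 • ∑ e ∈ H.edgeFinset, Sym2.lift f e = ∑ v, ∑ w ∈ H.neighborFinset v, f.1 v w := by
  rw [← sum_dart_edge, ← sum_dart_eq_sum_sum_neighborFinset]
  rfl

end SimpleGraph

lemma two_mul_somborIndex {W : Type*} [Fintype W] [DecidableEq W] (H : SimpleGraph W)
    [DecidableRel H.Adj] :
    2 * somborIndex H =
      ∑ v, ∑ w ∈ H.neighborFinset v, √((H.degree v : ℝ) ^ 2 + (H.degree w : ℝ) ^ 2) := by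
  rw [somborIndex, two_mul, ← two_nsmul]
  exact H.two_nsmul_sum_edgeFinset_lift _

lemma Fin.sum_sum_filter_eq_zero_or_eq_zero {M : Type*} [AddCommMonoid M] {n : ℕ}
    (f : Fin (n + 1) → Fin (n + 1) → M) :
    ∑ i, ∑ j with i = 0 ∨ j = 0, f i j = f 0 0 + ∑ j : Fin n, (f 0 j.succ + f j.succ 0) := by
  simp [Fin.sum_univ_succ, Fin.succ_ne_zero, Finset.filter_eq', Finset.sum_add_distrib, add_assoc]

section splittingGraph

variable {V : Type*} [Fintype V] (G : SimpleGraph V) [DecidableRel G.Adj] (m : ℕ)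

lemma splittingGraph_neighborFinset (v : V) (i : Fin (m + 1)) :
    (splittingGraph G m).neighborFinset (v, i) =
      G.neighborFinset v ×ˢ ({j | i = 0 ∨ j = 0} : Finset _) := by
  ext ⟨w, j⟩
  rw [SimpleGraph.mem_neighborFinset]
  simp [splittingGraph]

lemma splittingGraph_degree (v : V) (i : Fin (m + 1)) :
    (splittingGraph G m).degree (v, i) = (if i = 0 then m + 1 else 1) * G.degree v := by
  rw [← SimpleGraph.card_neighborFinset_eq_degree, splittingGraph_neighborFinset,
    Finset.card_product, mul_comm]
  split_ifs with hi
  · simp [hi]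
  · simp [hi, Finset.filter_eq']

lemma sum_sum_neighborFinset_splittingGraph {M : Type*} [AddCommMonoid M]
    (f : Fin (m + 1) → Fin (m + 1) → M) :
    ∑ p, ∑ q ∈ (splittingGraph G m).neighborFinset p, f p.2 q.2 =
      (∑ v, G.degree v) • ∑ i, ∑ j with i = 0 ∨ j = 0, f i j := by
  simp_rw [Fintype.sum_prod_type, splittingGraph_neighborFinset, Finset.sum_product,
    Finset.sum_const, ← Finset.smul_sum, SimpleGraph.card_neighborFinset_eq_degree,
    Finset.sum_smul]

end splittingGraph

lemma SimpleGraph.IsRegularOfDegree.two_mul_somborIndex_splittingGraph {V : Type*} [Fintype V]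
    [DecidableEq V] {G : SimpleGraph V} [DecidableRel G.Adj] {k : ℕ}
    (hreg : G.IsRegularOfDegree k) (m : ℕ) :
    2 * somborIndex (splittingGraph G m) =
      Fintype.card V * k ^ 2 * (√2 * (m + 1) + 2 * m * √(m ^ 2 + 2 * m + 2)) := by
  set c : Fin (m + 1) → ℝ := fun i => if i = 0 then (m + 1) * k else k
  have hdeg (p : V × Fin (m + 1)) : ((splittingGraph G m).degree p : ℝ) = c p.2 := by
    rw [splittingGraph_degree, hreg.degree_eq]
    split_ifs with hp <;> simp [c, hp]
  have hsum : ∑ i, ∑ j with i = 0 ∨ j = 0, √(c i ^ 2 + c j ^ 2) =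
      k * (√2 * (m + 1) + 2 * m * √(m ^ 2 + 2 * m + 2)) := by
    rw [Fin.sum_sum_filter_eq_zero_or_eq_zero]
    simp only [c, if_pos, Fin.succ_ne_zero, if_false, Finset.sum_const, Finset.card_univ,
      Fintype.card_fin, nsmul_eq_mul, add_comm (k ^ 2 : ℝ)]
    have hdiag : √(((m + 1) * k) ^ 2 + ((m + 1) * k) ^ 2 : ℝ) = k * (√2 * (m + 1)) := by
      rw [← two_mul, Real.sqrt_mul zero_le_two, Real.sqrt_sq (by positivity)]
      ring
    have hoff : √(((m + 1) * k) ^ 2 + k ^ 2 : ℝ) = k * √(m ^ 2 + 2 * m + 2) := by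
      rw [show ((m + 1) * k) ^ 2 + k ^ 2 = (k : ℝ) ^ 2 * (m ^ 2 + 2 * m + 2) by ring,
        Real.sqrt_mul (sq_nonneg _), Real.sqrt_sq k.cast_nonneg]
    rw [hdiag, hoff]
    ring
  calc
    _ = ∑ p, ∑ q ∈ (splittingGraph G m).neighborFinset p, √(c p.2 ^ 2 + c q.2 ^ 2) := by
      simp_rw [two_mul_somborIndex, hdeg]
    _ = (∑ v, G.degree v) • ∑ i, ∑ j with i = 0 ∨ j = 0, √(c i ^ 2 + c j ^ 2) :=
      sum_sum_neighborFinset_splittingGraph G m fun i j => √(c i ^ 2 + c j ^ 2)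
    _ = _ := by
      simp only [hreg.degree_eq, Finset.sum_const, Finset.card_univ, smul_eq_mul, hsum,
        nsmul_eq_mul, Nat.cast_mul]
      ring

theorem sombor_index_splitting {V : Type*} [Fintype V] [DecidableEq V]
    (G : SimpleGraph V) [DecidableRel G.Adj] (k m : ℕ)
    (hreg : G.IsRegularOfDegree k) :
    somborIndex (splittingGraph G m) =
      ((Fintype.card V : ℝ) * (k : ℝ) ^ 2 / Real.sqrt 2) *
        ((m : ℝ) * Real.sqrt (2 * (m : ℝ) ^ 2 + 4 * m + 4) + (m + 1)) := by
  have h := hreg.two_mul_somborIndex_splittingGraph m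
  have hfactor : √(2 * (m : ℝ) ^ 2 + 4 * m + 4) = √2 * √(m ^ 2 + 2 * m + 2) := by
    rw [← Real.sqrt_mul zero_le_two]
    ring_nf
  have hsqrt2 : √2 * √2 = (2 : ℝ) := Real.mul_self_sqrt zero_le_two
  rw [hfactor, div_mul_eq_mul_div, eq_div_iff (by positivity)]
  linear_combination √2 / 2 * h + Fintype.card V * k ^ 2 * (m + 1) / 2 * hsqrt2
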